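/- Let T : V → W_n be a nonzero linear map with image U ⊆ W_n = k[x,y]_n, and let d = deg gcd(U). Then for sufficiently large m, the rank of the multiplication map Γ : V ⊗ W_m → W_{n+m}, v ⊗ g ↦ T(v)g, equals n + m + 1 − d. In particular, the stable pair lies in M(n)_j (image of degree ≤ j, i.e., gcd degree ≥ n−j) if and only if rank Γ ≤ m + 1 + j. -/

import Mathlib

open Module MvPolynomial

namespace RkMul
open Polynomial
variable {k : Type*} [Field k]

lemma fin2_ext (d : Fin 2 →₀ ℕ) : d = Finsupp.single 0 (d 0) + Finsupp.single 1 (d 1) := by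
  ext i; fin_cases i <;> simp

lemma degree_fin2 (d : Fin 2 →₀ ℕ) : d.degree = d 0 + d 1 := by
  rw [Finsupp.degree_apply]
  rw [Finset.sum_subset (Finset.subset_univ d.support)]
  · simp [Fin.sum_univ_two]
  · intro i _ hi
    simpa using (Finsupp.notMem_support_iff.mp hi)

noncomputable def sig (e : ℕ) (i : Fin (e+1)) : Fin 2 →₀ ℕ :=
  Finsupp.single 0 i.val + Finsupp.single 1 (e - i.val)

lemma sig_apply0 (e : ℕ) (i : Fin (e+1)) : sig e i 0 = i.val := by simp [sig]
lemma sig_degree (e : ℕ) (i : Fin (e+1)) : (sig e i).degree = e := by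
  rw [degree_fin2]; simp [sig]; omega

lemma sig_inj (e : ℕ) : Function.Injective (sig e) := by
  intro i j hij
  have := congrArg (fun d => d 0) hij
  simp [sig] at this
  exact Fin.ext this

lemma eq_sig_of_degree (e : ℕ) (d : Fin 2 →₀ ℕ) (hd : d.degree = e) :
    ∃ i : Fin (e+1), d = sig e i := by
  have h2 := degree_fin2 d
  refine ⟨⟨d 0, by omega⟩, ?_⟩
  have h3 : d 1 = e - d 0 := by omega
  conv_lhs => rw [fin2_ext d]
  simp only [sig, h3]

variable (k) in
noncomputable def phi (e : ℕ) : (homogeneousSubmodule (Fin 2) k e) →ₗ[k] (Fin (e+1) → k) where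
  toFun p := fun i => coeff (sig e i) (p : MvPolynomial (Fin 2) k)
  map_add' p q := by ext i; simp
  map_smul' c p := by ext i; simp

variable (k) in
noncomputable def psi (e : ℕ) : (Fin (e+1) → k) →ₗ[k] (homogeneousSubmodule (Fin 2) k e) where
  toFun c := ⟨∑ i, monomial (sig e i) (c i), by
    apply Submodule.sum_mem
    intro i _
    exact isHomogeneous_monomial _ (sig_degree e i)⟩
  map_add' c c' := by
    apply Subtype.ext
    simp [Finset.sum_add_distrib]
  map_smul' a c := by
    apply Subtype.ext
    show ∑ i, monomial (sig e i) ((a • c) i) = a • ∑ i, monomial (sig e i) (c i)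
    rw [Finset.smul_sum]
    exact Finset.sum_congr rfl fun i _ => by rw [MvPolynomial.smul_monomial]; rfl

lemma phi_psi (e : ℕ) (c : Fin (e+1) → k) : phi k e (psi k e c) = c := by
  ext i
  simp only [phi, psi, LinearMap.coe_mk, AddHom.coe_mk]
  rw [MvPolynomial.coeff_sum]
  rw [Finset.sum_eq_single i]
  · simp
  · intro j _ hji
    rw [MvPolynomial.coeff_monomial, if_neg (fun hc => hji (sig_inj e hc))]
  · simp

lemma psi_phi {k : Type*} [Field k] (e : ℕ) (p : homogeneousSubmodule (Fin 2) k e) : psi k e (phi k e p) = p := by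
  apply Subtype.ext
  simp only [phi, psi, LinearMap.coe_mk, AddHom.coe_mk]
  ext d
  rw [MvPolynomial.coeff_sum]
  by_cases hd : d.degree = e
  · obtain ⟨i, rfl⟩ := eq_sig_of_degree e d hd
    rw [Finset.sum_eq_single i]
    · simp
    · intro j _ hji
      rw [MvPolynomial.coeff_monomial, if_neg (fun hc => hji (sig_inj e hc))]
    · simp
  · have hz : coeff d (p : MvPolynomial (Fin 2) k) = 0 := p.2.coeff_eq_zero hd
    rw [hz]
    apply Finset.sum_eq_zero
    intro j _
    rw [MvPolynomial.coeff_monomial, if_neg]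
    intro hc
    exact hd (hc ▸ sig_degree e j)

variable (k) in
noncomputable def wEquiv (e : ℕ) : (homogeneousSubmodule (Fin 2) k e) ≃ₗ[k] (Fin (e+1) → k) :=
  LinearEquiv.ofLinear (phi k e) (psi k e)
    (LinearMap.ext fun c => phi_psi e c) (LinearMap.ext fun p => psi_phi e p)

instance (e : ℕ) : FiniteDimensional k (homogeneousSubmodule (Fin 2) k e) :=
  Module.Finite.equiv (wEquiv k e).symm

lemma finrank_W (e : ℕ) : finrank k (homogeneousSubmodule (Fin 2) k e) = e + 1 := by
  rw [LinearEquiv.finrank_eq (wEquiv k e), finrank_fintype_fun_eq_card, Fintype.card_fin]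

/-- polynomial with only one "degree slot" is a monomial -/
lemma poly_eq_monomial_of_trailing {R : Type*} [CommRing R] {f : R[X]}
    (h : f.natTrailingDegree = f.natDegree) :
    f = Polynomial.monomial f.natDegree (f.coeff f.natDegree) := by
  ext i
  rw [Polynomial.coeff_monomial]
  rcases lt_trichotomy i f.natDegree with hi | hi | hi
  · rw [if_neg hi.ne', Polynomial.coeff_eq_zero_of_lt_natTrailingDegree (h ▸ hi)]
  · rw [if_pos hi.symm, hi]
  · rw [if_neg hi.ne, Polynomial.coeff_eq_zero_of_natDegree_lt hi]

lemma monomial_factor {R : Type*} [CommRing R] [IsDomain R] {f g : R[X]} {c : R} {n : ℕ}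
    (hc : c ≠ 0) (h : f * g = Polynomial.C c * Polynomial.X ^ n) :
    f = Polynomial.monomial f.natDegree (f.coeff f.natDegree) := by
  classical
  have hfg : f * g ≠ 0 := by
    rw [h, Polynomial.C_mul_X_pow_eq_monomial]
    simpa using hc
  have hf : f ≠ 0 := fun hf => hfg (by simp [hf])
  have hg : g ≠ 0 := fun hg => hfg (by simp [hg])
  have hdeg : f.natDegree + g.natDegree = n := by
    rw [← Polynomial.natDegree_mul hf hg, h, Polynomial.C_mul_X_pow_eq_monomial,
      Polynomial.natDegree_monomial, if_neg hc]
  have htr : f.natTrailingDegree + g.natTrailingDegree = n := by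
    rw [← Polynomial.natTrailingDegree_mul hf hg, h, Polynomial.C_mul_X_pow_eq_monomial,
      Polynomial.natTrailingDegree_monomial hc]
  have h1 : f.natTrailingDegree ≤ f.natDegree := Polynomial.natTrailingDegree_le_natDegree f
  have h2 : g.natTrailingDegree ≤ g.natDegree := Polynomial.natTrailingDegree_le_natDegree g
  exact poly_eq_monomial_of_trailing (by omega)

variable (k) in
/-- the scaling map `p(x) ↦ p(t·x)` into `k[x,y][t]` -/
noncomputable def scale : MvPolynomial (Fin 2) k →ₐ[k] Polynomial (MvPolynomial (Fin 2) k) :=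
  MvPolynomial.aeval (fun i => Polynomial.C (X i) * Polynomial.X)

lemma scale_monomial (d : Fin 2 →₀ ℕ) (r : k) :
    scale k (MvPolynomial.monomial d r)
      = Polynomial.C (MvPolynomial.monomial d r) * Polynomial.X ^ d.degree := by
  rw [MvPolynomial.monomial_eq]
  simp only [scale, map_mul, MvPolynomial.aeval_C]
  rw [Finsupp.prod, map_prod]
  simp only [map_pow, MvPolynomial.aeval_X]
  simp_rw [mul_pow, ← Polynomial.C_pow]
  rw [Finset.prod_mul_distrib, ← map_prod, Finset.prod_pow_eq_pow_sum]
  rw [← Finsupp.degree_apply]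
  rw [Polynomial.algebraMap_apply]
  simp only [algebraMap_eq]
  ring

lemma coeff_scale (p : MvPolynomial (Fin 2) k) (m : ℕ) :
    (scale k p).coeff m = homogeneousComponent m p := by
  induction p using MvPolynomial.induction_on' with
  | monomial d r =>
    rw [scale_monomial, Polynomial.C_mul_X_pow_eq_monomial, Polynomial.coeff_monomial]
    ext e
    rw [coeff_homogeneousComponent]
    by_cases hd : e.degree = m
    · rw [if_pos hd]
      by_cases hdm : d.degree = m
      · rw [if_pos hdm]
      · rw [if_neg hdm, MvPolynomial.coeff_zero, MvPolynomial.coeff_monomial, if_neg]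
        rintro rfl
        exact hdm hd
    · rw [if_neg hd]
      by_cases hdm : d.degree = m
      · rw [if_pos hdm, MvPolynomial.coeff_monomial, if_neg]
        rintro rfl
        exact hd hdm
      · rw [if_neg hdm, MvPolynomial.coeff_zero]
  | add p q hp hq =>
    rw [map_add, Polynomial.coeff_add, hp, hq, map_add]

lemma eval_one_scale (p : MvPolynomial (Fin 2) k) :
    Polynomial.eval 1 (scale k p) = p := by
  have : (Polynomial.evalRingHom (1 : MvPolynomial (Fin 2) k)).comp (scale k).toRingHom
      = RingHom.id _ := by
    apply MvPolynomial.ringHom_ext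
    · intro r
      simp [scale, MvPolynomial.algebraMap_eq]
    · intro i
      simp [scale]
  calc Polynomial.eval 1 (scale k p)
      = ((Polynomial.evalRingHom (1 : MvPolynomial (Fin 2) k)).comp (scale k).toRingHom) p := rfl
    _ = p := by rw [this]; rfl

lemma scale_of_isHomogeneous {p : MvPolynomial (Fin 2) k} {n : ℕ} (hp : p.IsHomogeneous n) :
    scale k p = Polynomial.C p * Polynomial.X ^ n := by
  ext m : 1
  rw [coeff_scale, Polynomial.C_mul_X_pow_eq_monomial, Polynomial.coeff_monomial,
    homogeneousComponent_of_mem hp]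
  by_cases hm : m = n
  · simp [hm]
  · rw [if_neg hm, if_neg (fun hc => hm hc.symm)]

lemma isHomogeneous_of_scale_eq {p : MvPolynomial (Fin 2) k} {m : ℕ}
    (hsc : scale k p = Polynomial.monomial m (p : MvPolynomial (Fin 2) k)) :
    p.IsHomogeneous m := by
  intro e he
  rw [show (Finsupp.weight 1 : (Fin 2 →₀ ℕ) →+ ℕ) = Finsupp.degree from
    Finsupp.degree_eq_weight_one.symm]
  by_contra hem
  have h1 : MvPolynomial.coeff e ((scale k p).coeff e.degree) = MvPolynomial.coeff e p := by
    rw [coeff_scale, coeff_homogeneousComponent, if_pos rfl]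
  rw [hsc, Polynomial.coeff_monomial, if_neg (fun hc => hem hc.symm)] at h1
  exact he (by simpa using h1.symm)

/-- factors of a nonzero homogeneous polynomial are homogeneous -/
theorem isHomogeneous_of_dvd {p a : MvPolynomial (Fin 2) k} {n : ℕ}
    (hp : p.IsHomogeneous n) (hp0 : p ≠ 0) (ha : a ∣ p) :
    a.IsHomogeneous ((scale k a).natDegree) := by
  obtain ⟨b, rfl⟩ := ha
  have ha0 : a ≠ 0 := fun h => hp0 (by simp [h])
  have hsc : scale k a * scale k b = Polynomial.C (a * b) * Polynomial.X ^ n := by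
    rw [← map_mul, scale_of_isHomogeneous hp]
  have := monomial_factor (mul_ne_zero ha0 (fun h => hp0 (by simp [h]))) hsc
  -- `(scale k a).coeff (natDegree) = homogeneousComponent _ a`; show it is `a`
  have hcoe : ((scale k) a).coeff ((scale k) a).natDegree = a := by
    have h2 := congrArg (Polynomial.eval (1 : MvPolynomial (Fin 2) k)) this
    rw [eval_one_scale, Polynomial.eval_monomial, one_pow, mul_one] at h2
    exact h2.symm
  rw [hcoe] at this
  exact isHomogeneous_of_scale_eq this

section P4

variable (k) in
noncomputable def mulMapTo (u : MvPolynomial (Fin 2) k) {a b s : ℕ} (hu : u.IsHomogeneous a)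
    (hab : a + b = s) :
    (homogeneousSubmodule (Fin 2) k b) →ₗ[k] (homogeneousSubmodule (Fin 2) k s) where
  toFun g := ⟨u * g, hab ▸ hu.mul g.2⟩
  map_add' g1 g2 := by apply Subtype.ext; simp [mul_add]
  map_smul' c g := by apply Subtype.ext; simp [Algebra.mul_smul_comm]

@[simp] lemma mulMapTo_apply (u : MvPolynomial (Fin 2) k) {a b s : ℕ} (hu : u.IsHomogeneous a)
    (hab : a + b = s) (g : homogeneousSubmodule (Fin 2) k b) :
    (mulMapTo k u hu hab g : MvPolynomial (Fin 2) k) = u * g := rfl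

theorem sylvester {p q : MvPolynomial (Fin 2) k} {a b : ℕ}
    (hp : p.IsHomogeneous a) (hq : q.IsHomogeneous b) (hp0 : p ≠ 0) (hq0 : q ≠ 0)
    (hcop : IsRelPrime p q) {s : ℕ} (hs : a + b ≤ s)
    (w : MvPolynomial (Fin 2) k) (hw : w.IsHomogeneous s) :
    ∃ f g : MvPolynomial (Fin 2) k,
      f.IsHomogeneous (s-a) ∧ g.IsHomogeneous (s-b) ∧ w = p * f + q * g := by
  have ha : a ≤ s := by omega
  have hb : b ≤ s := by omega
  have e1 : a + (s - a) = s := by omega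
  have e2 : b + (s - b) = s := by omega
  have e3 : b + (s - a - b) = s - a := by omega
  have e4 : a + (s - a - b) = s - b := by omega
  set Wa := homogeneousSubmodule (Fin 2) k (s - a)
  set Wb := homogeneousSubmodule (Fin 2) k (s - b)
  set Ws := homogeneousSubmodule (Fin 2) k s
  let Φ : (Wa × Wb) →ₗ[k] Ws :=
    (mulMapTo k p hp e1).comp (LinearMap.fst k Wa Wb)
      + (mulMapTo k q hq e2).comp (LinearMap.snd k Wa Wb)
  let θ : (homogeneousSubmodule (Fin 2) k (s - a - b)) →ₗ[k] (Wa × Wb) :=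
    LinearMap.prod (mulMapTo k q hq e3) (- mulMapTo k p hp e4)
  have hθinj : Function.Injective θ := by
    intro t1 t2 h12
    have := congrArg (fun z => (z.1 : MvPolynomial (Fin 2) k)) h12
    simp only [θ, LinearMap.prod_apply, Pi.prod, mulMapTo_apply] at this
    exact Subtype.ext (mul_left_cancel₀ hq0 this)
  have hker : LinearMap.ker Φ = LinearMap.range θ := by
    apply le_antisymm
    · rintro ⟨f, g⟩ hfg
      have hrel : p * (f : MvPolynomial (Fin 2) k) + q * g = 0 := by
        have := congrArg (fun z : Ws => (z : MvPolynomial (Fin 2) k)) (LinearMap.mem_ker.mp hfg)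
        simpa [Φ] using this
      by_cases hf : (f : MvPolynomial (Fin 2) k) = 0
      · have hg : (g : MvPolynomial (Fin 2) k) = 0 := by
          have : q * (g : MvPolynomial (Fin 2) k) = 0 := by rw [hf] at hrel; simpa using hrel
          exact (mul_eq_zero.mp this).resolve_left hq0
        refine ⟨0, ?_⟩
        apply Prod.ext <;> apply Subtype.ext <;>
          simp [θ, hf, hg]
      · have hqf : q ∣ (f : MvPolynomial (Fin 2) k) := by
          refine (hcop.symm).dvd_of_dvd_mul_left (y := p) ?_
          exact ⟨-(g : MvPolynomial (Fin 2) k), by linear_combination hrel⟩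
        obtain ⟨t, ht⟩ := hqf
        have ht0 : t ≠ 0 := fun hc => hf (by rw [ht, hc, mul_zero])
        have htdeg : t.IsHomogeneous (s - a - b) := by
          obtain ⟨τ, hτ⟩ : ∃ τ, t.IsHomogeneous τ :=
            ⟨_, isHomogeneous_of_dvd f.2 hf ⟨q, by rw [ht]; ring⟩⟩
          have : b + τ = s - a := (hq.mul hτ).inj_right (ht ▸ f.2) (ht ▸ hf)
          have : τ = s - a - b := by omega
          exact this ▸ hτ
        have hg : (g : MvPolynomial (Fin 2) k) = -(p * t) := by
          have hq' : q * (g : MvPolynomial (Fin 2) k) = q * (-(p * t)) := by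
            linear_combination hrel - p * ht
          exact mul_left_cancel₀ hq0 hq'
        refine ⟨⟨t, htdeg⟩, ?_⟩
        apply Prod.ext
        · apply Subtype.ext
          show q * t = (f : MvPolynomial (Fin 2) k)
          exact ht.symm
        · apply Subtype.ext
          show -(p * t) = (g : MvPolynomial (Fin 2) k)
          exact hg.symm
    · rintro _ ⟨t, rfl⟩
      apply LinearMap.mem_ker.mpr
      apply Subtype.ext
      show p * (q * (t : MvPolynomial (Fin 2) k)) + q * (-(p * t)) = 0
      ring
  have hrank : finrank k (LinearMap.range Φ) = s + 1 := by
    have h1 := LinearMap.finrank_range_add_finrank_ker Φ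
    rw [hker, LinearMap.finrank_range_of_inj hθinj] at h1
    have h2 : finrank k (Wa × Wb) = (s - a + 1) + (s - b + 1) := by
      rw [Module.finrank_prod, finrank_W, finrank_W]
    rw [h2, finrank_W] at h1
    omega
  have hsurj : LinearMap.range Φ = ⊤ := by
    apply Submodule.eq_top_of_finrank_eq
    rw [hrank, finrank_W]
  obtain ⟨⟨f, g⟩, hfg⟩ := (LinearMap.range_eq_top.mp hsurj) ⟨w, hw⟩
  refine ⟨f, g, f.2, g.2, ?_⟩
  have := congrArg (fun z : Ws => (z : MvPolynomial (Fin 2) k)) hfg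
  simpa [Φ] using this.symm

end P4

end RkMul

open RkMul

/-- For a nonzero `T : V → W_n` with image `U` having gcd of degree `d`, for
sufficiently large `m` the multiplication map `Γ : V ⊗ W_m → W_{n+m}`,
`v ⊗ g ↦ T(v)·g`, has rank `n + m + 1 − d`; in particular the stable pair lies in
`M(n)_j` (i.e. `d ≥ n − j`) if and only if `rank Γ ≤ m + 1 + j`. -/
theorem rank_of_multiplication_map
    (k : Type*) [Field k] [IsAlgClosed k]
    (V : Type*) [AddCommGroup V] [Module k V] [FiniteDimensional k V]
    (n : ℕ)
    (T : V →ₗ[k] (homogeneousSubmodule (Fin 2) k n)) (hT : T ≠ 0)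
    (h : MvPolynomial (Fin 2) k) (hh : h ≠ 0)
    (hdvd : ∀ p ∈ (LinearMap.range T).map (homogeneousSubmodule (Fin 2) k n).subtype, h ∣ p)
    (hgcd : ∀ h' : MvPolynomial (Fin 2) k,
      (∀ p ∈ (LinearMap.range T).map (homogeneousSubmodule (Fin 2) k n).subtype, h' ∣ p) →
      h' ∣ h)
    (d : ℕ) (hd : d = h.totalDegree) :
    ∃ m₀ : ℕ, ∀ m ≥ m₀,
      ∀ Γ : TensorProduct k V (homogeneousSubmodule (Fin 2) k m) →ₗ[k]
        (homogeneousSubmodule (Fin 2) k (n + m)),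
      (∀ (v : V) (g : homogeneousSubmodule (Fin 2) k m),
        ((Γ (v ⊗ₜ[k] g) : MvPolynomial (Fin 2) k)) = (T v : MvPolynomial (Fin 2) k) * g) →
      Module.finrank k (LinearMap.range Γ) = n + m + 1 - d ∧
      ∀ j ≤ n, (Module.finrank k (LinearMap.range Γ) ≤ m + 1 + j ↔ n - j ≤ d) := by
  classical
  -- every image value is divisible by h
  have hdvd' : ∀ v : V, h ∣ (T v : MvPolynomial (Fin 2) k) := fun v =>
    hdvd _ (Submodule.mem_map.mpr ⟨T v, LinearMap.mem_range_self T v, rfl⟩)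
  -- a vector with nonzero image
  obtain ⟨v₀, hv₀⟩ : ∃ v, T v ≠ 0 := by
    by_contra hc
    push_neg at hc
    exact hT (LinearMap.ext fun v => hc v)
  have hv₀' : (T v₀ : MvPolynomial (Fin 2) k) ≠ 0 := fun hc => hv₀ (Subtype.ext hc)
  -- the quotients u v = T v / h
  obtain ⟨u, hu⟩ : ∃ u : V → MvPolynomial (Fin 2) k,
      ∀ v, (T v : MvPolynomial (Fin 2) k) = h * u v :=
    ⟨fun v => Classical.choose (hdvd' v), fun v => Classical.choose_spec (hdvd' v)⟩
  -- h is homogeneous of degree d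
  have hTmem : ∀ v : V, (T v : MvPolynomial (Fin 2) k).IsHomogeneous n := fun v => (T v).2
  have hh_hom : h.IsHomogeneous d := by
    have h1 : h.IsHomogeneous ((scale k h).natDegree) :=
      isHomogeneous_of_dvd (hTmem v₀) hv₀' (hdvd' v₀)
    rwa [hd, h1.totalDegree hh]
  have hu_hom : ∀ v : V, (u v).IsHomogeneous (n - d) ∧
      ((T v : MvPolynomial (Fin 2) k) ≠ 0 → d ≤ n) := by
    intro v
    by_cases hTv : (T v : MvPolynomial (Fin 2) k) = 0
    · have huv : u v = 0 := by
        have h2 := (hu v).symm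
        rw [hTv] at h2
        exact (mul_eq_zero.mp h2).resolve_left hh
      rw [huv]
      exact ⟨MvPolynomial.isHomogeneous_zero _ _ _, fun hc => absurd hTv hc⟩
    · have huv0 : u v ≠ 0 := fun hc => hTv (by rw [hu v, hc, mul_zero])
      have h1 : (u v).IsHomogeneous ((scale k (u v)).natDegree) :=
        isHomogeneous_of_dvd (hTmem v) hTv ⟨h, by rw [hu v]; ring⟩
      have h2 : d + (scale k (u v)).natDegree = n :=
        (hh_hom.mul h1).inj_right ((hu v) ▸ (hTmem v)) ((hu v) ▸ hTv)
      constructor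
      · rwa [show n - d = (scale k (u v)).natDegree by omega]
      · intro _; omega
  have hdn : d ≤ n := (hu_hom v₀).2 hv₀'
  have hp0 : u v₀ ≠ 0 := fun hc => hv₀' (by rw [hu v₀, hc, mul_zero])
  have hp_hom : (u v₀).IsHomogeneous (n - d) := (hu_hom v₀).1
  -- the subspaces to avoid
  set φT : V →ₗ[k] MvPolynomial (Fin 2) k :=
    (homogeneousSubmodule (Fin 2) k n).subtype.comp T with hφT
  have hφT_apply : ∀ v, φT v = (T v : MvPolynomial (Fin 2) k) := fun v => rfl
  set Vsub : MvPolynomial (Fin 2) k → Submodule k V := fun x =>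
    Submodule.comap φT (Submodule.restrictScalars k (Ideal.span {x})) with hVsub
  have hVsub_mem : ∀ x v, v ∈ Vsub x ↔ x ∣ (T v : MvPolynomial (Fin 2) k) := by
    intro x v
    simp only [hVsub, Submodule.mem_comap, Submodule.restrictScalars_mem,
      Ideal.mem_span_singleton]
    exact Iff.rfl
  set s : Finset (Subspace k V) :=
    insert (LinearMap.ker φT)
      ((UniqueFactorizationMonoid.factors (u v₀)).toFinset.image fun π => Vsub (π * h))
      with hs_def
  have htop : (⊤ : Subspace k V) ∉ s := by
    intro hc
    rw [hs_def, Finset.mem_insert] at hc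
    rcases hc with hc | hc
    · have hker : v₀ ∈ LinearMap.ker φT := by rw [← hc]; exact Submodule.mem_top
      exact hv₀' (by simpa [hφT_apply] using hker)
    · obtain ⟨π, hπ, hπeq⟩ := Finset.mem_image.mp hc
      have hπprime : Prime π :=
        UniqueFactorizationMonoid.prime_of_factor π (Multiset.mem_toFinset.mp hπ)
      have hπh : π * h ∣ h := by
        apply hgcd
        rintro w hw
        obtain ⟨y, hy, rfl⟩ := Submodule.mem_map.mp hw
        obtain ⟨v, rfl⟩ := hy
        have hv : v ∈ Vsub (π * h) := by rw [hπeq]; exact Submodule.mem_top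
        exact (hVsub_mem _ v).mp hv
      obtain ⟨c, hc'⟩ := hπh
      have hzero : h * (1 - π * c) = 0 := by linear_combination hc'
      have h1 : π * c = 1 := by
        rcases mul_eq_zero.mp hzero with h' | h'
        · exact absurd h' hh
        · linear_combination -h'
      exact hπprime.not_isUnit (IsUnit.of_mul_eq_one c h1)
  -- find v₁ avoiding all the subspaces
  obtain ⟨v₁, hv₁⟩ : ∃ v₁ : V, ∀ P ∈ s, v₁ ∉ P := by
    have hne := Subspace.biUnion_ne_univ_of_top_notMem (k := k) (E := V) htop
    rw [Set.ne_univ_iff_exists_notMem] at hne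
    obtain ⟨v₁, hv₁⟩ := hne
    exact ⟨v₁, fun P hP hmem => hv₁ (Set.mem_biUnion hP hmem)⟩
  have hv₁ker : (T v₁ : MvPolynomial (Fin 2) k) ≠ 0 := by
    intro hc
    exact hv₁ _ (Finset.mem_insert_self _ _) (by rwa [LinearMap.mem_ker, hφT_apply])
  have hq0 : u v₁ ≠ 0 := fun hc => hv₁ker (by rw [hu v₁, hc, mul_zero])
  have hq_hom : (u v₁).IsHomogeneous (n - d) := (hu_hom v₁).1
  have hcop : IsRelPrime (u v₀) (u v₁) := by
    intro D hDp hDq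
    by_contra hDu
    have hD0 : D ≠ 0 := fun hc => hp0 (by simpa [hc] using hDp)
    obtain ⟨i, hi_irr, hiD⟩ := WfDvdMonoid.exists_irreducible_factor hDu hD0
    obtain ⟨π, hπ_mem, hπ_assoc⟩ :=
      UniqueFactorizationMonoid.exists_mem_factors_of_dvd hp0 hi_irr (hiD.trans hDp)
    have hπq : π ∣ u v₁ := hπ_assoc.symm.dvd.trans (hiD.trans hDq)
    have hmem : v₁ ∈ Vsub (π * h) := by
      rw [hVsub_mem, hu v₁]
      obtain ⟨c, hc⟩ := hπq
      exact ⟨c, by rw [hc]; ring⟩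
    refine hv₁ _ ?_ hmem
    rw [hs_def]
    exact Finset.mem_insert_of_mem
      (Finset.mem_image.mpr ⟨π, Multiset.mem_toFinset.mpr hπ_mem, rfl⟩)
  -- main part
  refine ⟨n, fun m hm Γ hΓ => ?_⟩
  have e1 : d + ((n - d) + m) = n + m := by omega
  set mulH := mulMapTo k h hh_hom e1 with hmulH
  have hrange : LinearMap.range Γ = LinearMap.range mulH := by
    apply le_antisymm
    · rw [LinearMap.range_eq_map, ← TensorProduct.span_tmul_eq_top k V
        (homogeneousSubmodule (Fin 2) k m), Submodule.map_span]
      rw [Submodule.span_le]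
      rintro x ⟨y, ⟨v, g, rfl⟩, rfl⟩
      refine ⟨⟨u v * (g : MvPolynomial (Fin 2) k), (hu_hom v).1.mul g.2⟩, ?_⟩
      apply Subtype.ext
      show h * (u v * (g : MvPolynomial (Fin 2) k)) = _
      rw [hΓ v g, hu v]
      ring
    · rintro x ⟨t, rfl⟩
      have hta : (t : MvPolynomial (Fin 2) k).IsHomogeneous ((n - d) + m) := t.2
      obtain ⟨f, g, hf, hg, hw⟩ :=
        sylvester hp_hom hq_hom hp0 hq0 hcop (s := (n - d) + m) (by omega)
          (t : MvPolynomial (Fin 2) k) hta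
      have hf' : f.IsHomogeneous m := by rwa [show (n-d) + m - (n-d) = m by omega] at hf
      have hg' : g.IsHomogeneous m := by rwa [show (n-d) + m - (n-d) = m by omega] at hg
      refine ⟨v₀ ⊗ₜ ⟨f, hf'⟩ + v₁ ⊗ₜ ⟨g, hg'⟩, ?_⟩
      apply Subtype.ext
      rw [map_add]
      show (Γ (v₀ ⊗ₜ ⟨f, hf'⟩) : MvPolynomial (Fin 2) k) + (Γ (v₁ ⊗ₜ ⟨g, hg'⟩)) = h * t
      rw [hΓ v₀ ⟨f, hf'⟩, hΓ v₁ ⟨g, hg'⟩]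
      show (T v₀ : MvPolynomial (Fin 2) k) * f + (T v₁ : MvPolynomial (Fin 2) k) * g = h * t
      rw [hu v₀, hu v₁]
      linear_combination (-h) * hw
  have hinj : Function.Injective mulH := by
    intro t1 t2 ht12
    have hc := congrArg
      (fun z : (homogeneousSubmodule (Fin 2) k (n + m)) => (z : MvPolynomial (Fin 2) k)) ht12
    simp only [hmulH, mulMapTo_apply] at hc
    exact Subtype.ext (mul_left_cancel₀ hh hc)
  have hrank : Module.finrank k (LinearMap.range Γ) = n + m + 1 - d := by
    rw [hrange, LinearMap.finrank_range_of_inj hinj, finrank_W]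
    omega
  exact ⟨hrank, fun j hj => by rw [hrank]; omega⟩
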